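/- In a free group F of rank r ≥ 2, every negligible set is CT-negligible (generic-complement): if P ⊆ F is such that there is ε > 0 with all but finitely many p ∈ P having a piece of length ≥ ε|p|, then |P ∩ Bₙ| / |Bₙ| → 0 as n → ∞, where Bₙ is the ball of radius n in the Cayley graph of F with respect to a basis. -/

import Mathlib

/-- `v` occurs in `w` starting at position `i`. -/
def occursAt {X : Type*} (v w : List (X × Bool)) (i : ℕ) : Prop :=
  (w.drop i).take v.length = v

/-- The formal inverse of a word. -/
def wordInv {X : Type*} (v : List (X × Bool)) : List (X × Bool) :=
  (v.map (fun p => (p.1, !p.2))).reverse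

/-- `v` is a piece of `w`: a nontrivial subword occurring in at least two different
ways (possibly as the inverse, possibly overlapping). -/
def IsPiece {X : Type*} (v w : List (X × Bool)) : Prop :=
  v ≠ [] ∧ ((∃ i j, i ≠ j ∧ occursAt v w i ∧ occursAt v w j) ∨
    (∃ i j, occursAt v w i ∧ occursAt (wordInv v) w j))

/-- Reduced word length of an element of the free group. -/
def glen {X : Type*} [DecidableEq X] (g : FreeGroup X) : ℕ := g.toWord.length

/-- A subset of a free group is negligible if for some `ε > 0` all but finitely many of
its elements `p` have a piece of length at least `ε·|p|`. -/
def Negligible {X : Type*} [DecidableEq X] (P : Set (FreeGroup X)) : Prop :=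
  ∃ ε : ℝ, 0 < ε ∧
    {p ∈ P | ¬ ∃ v, IsPiece v p.toWord ∧ ε * glen p ≤ (v.length : ℝ)}.Finite

/-!
A reduced word with a piece `v` of length at least `2h` contains a window of `h` consecutive
letters each of which repeats, possibly inverted, a strictly earlier letter of the word: take the
last `h` letters of the second occurrence of `v`. The rule saying which letter is copied is fixed
by the orientation of the two occurrences and by their positions, so there are only `O(m²)`
rules for words of length `m`, and a word obeying a given rule is determined by its letters
outside the window. Hence at most `O(m²) (2r-1)^(m-h)` reduced words of length `m` have such a
piece. Taking `h ≈ εm/2` and summing over `m ≤ n`, the elements of `Bₙ` with a piece of length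
`≥ ε|p|` number `O(n³ (2r-1)^((1-ε/2)n))`, whereas `|Bₙ| ≥ (2r-1)ⁿ`.
-/

open Filter Topology
open scoped Classical

section ReducedWords

variable (X : Type*) [DecidableEq X] [Fintype X]

noncomputable def reducedWords : ℕ → Finset (List (X × Bool))
  | 0 => {[]}
  | t + 1 => (reducedWords t).biUnion fun w =>
      ({a | FreeGroup.IsReduced (a :: w)} : Finset (X × Bool)).image (· :: w)

variable {X}

theorem mem_reducedWords {t : ℕ} {w : List (X × Bool)} :
    w ∈ reducedWords X t ↔ FreeGroup.IsReduced w ∧ w.length = t := by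
  induction t generalizing w with
  | zero =>
    rw [reducedWords, Finset.mem_singleton, List.length_eq_zero_iff]
    exact ⟨fun hw => ⟨hw ▸ FreeGroup.IsReduced.nil, hw⟩, And.right⟩
  | succ t ih =>
    cases w with
    | nil => simp [reducedWords]
    | cons a u =>
      simp only [reducedWords, Finset.mem_biUnion, Finset.mem_image, Finset.mem_filter,
        Finset.mem_univ, true_and, List.cons.injEq, ih, List.length_cons, add_left_inj]
      constructor
      · rintro ⟨u, ⟨-, rfl⟩, a, ha, rfl, rfl⟩
        exact ⟨ha, rfl⟩
      · rintro ⟨ha, rfl⟩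
        exact ⟨u, ⟨ha.tail, rfl⟩, a, ha, rfl, rfl⟩

theorem filter_isReduced_cons_cons {b : X × Bool} {l : List (X × Bool)}
    (hl : FreeGroup.IsReduced (b :: l)) :
    ({a | FreeGroup.IsReduced (a :: b :: l)} : Finset (X × Bool)) =
      Finset.univ.erase (b.1, !b.2) := by
  ext ⟨x, s⟩
  obtain ⟨y, t⟩ := b
  simp only [FreeGroup.isReduced_cons_cons, hl, and_true, Finset.mem_filter, Finset.mem_univ,
    true_and, Finset.mem_erase, ne_eq, Prod.mk.injEq, not_and]
  constructor
  · rintro h rfl; cases s <;> cases t <;> simp_all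
  · rintro h rfl; cases s <;> cases t <;> simp_all

theorem card_reducedWords_succ_eq_sum (t : ℕ) :
    (reducedWords X (t + 1)).card =
      ∑ w ∈ reducedWords X t, ({a | FreeGroup.IsReduced (a :: w)} : Finset (X × Bool)).card := by
  rw [reducedWords, Finset.card_biUnion]
  · exact Finset.sum_congr rfl fun w _ => Finset.card_image_of_injective _ fun a b h => by
      simpa using h
  · intro w _ u _ hwu
    simp only [Finset.disjoint_left, Finset.mem_image]
    rintro _ ⟨a, -, rfl⟩ ⟨c, -, h⟩
    exact hwu (List.cons_eq_cons.mp h).2.symm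

theorem card_reducedWords_succ (t : ℕ) :
    (reducedWords X (t + 1)).card =
      Fintype.card (X × Bool) * (Fintype.card (X × Bool) - 1) ^ t := by
  induction t with
  | zero =>
    simp [reducedWords, Finset.card_image_of_injective _ List.singleton_injective]
  | succ t ih =>
    rw [card_reducedWords_succ_eq_sum,
      Finset.sum_congr rfl (g := fun _ => Fintype.card (X × Bool) - 1), Finset.sum_const, ih,
      smul_eq_mul, pow_succ, mul_assoc]
    intro w hw
    obtain ⟨hw, hlen⟩ := mem_reducedWords.mp hw
    obtain ⟨b, l, rfl⟩ := List.exists_cons_of_length_eq_add_one hlen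
    rw [filter_isReduced_cons_cons hw, Finset.card_erase_of_mem (Finset.mem_univ _),
      Finset.card_univ]

theorem pow_le_card_reducedWords (t : ℕ) :
    (Fintype.card (X × Bool) - 1) ^ t ≤ (reducedWords X t).card := by
  cases t with
  | zero => simp [reducedWords]
  | succ t =>
    rw [card_reducedWords_succ, pow_succ']
    exact Nat.mul_le_mul_right _ (Nat.sub_le _ _)

theorem card_reducedWords_le [Nonempty X] (t : ℕ) :
    (reducedWords X t).card ≤ Fintype.card (X × Bool) * (Fintype.card (X × Bool) - 1) ^ t := by
  have : 2 ≤ Fintype.card (X × Bool) := by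
    rw [Fintype.card_prod, Fintype.card_bool]; linarith [Fintype.card_pos (α := X)]
  cases t with
  | zero => rw [reducedWords, Finset.card_singleton, pow_zero, mul_one]; omega
  | succ t =>
    rw [card_reducedWords_succ]
    exact Nat.mul_le_mul_left _ (Nat.pow_le_pow_right (by omega) (Nat.le_succ t))

end ReducedWords

section Copying

variable {α : Type*}

def IsCopiedOn (w : List α) (a h : ℕ) (σ : ℕ → ℕ) (f : α → α) : Prop :=
  a + h ≤ w.length ∧ ∀ s, a ≤ s → s < a + h → σ s < s ∧ w[s]? = (w[σ s]?).map f

theorem IsCopiedOn.eq {w₁ w₂ : List α} {a h : ℕ} {σ : ℕ → ℕ} {f : α → α}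
    (h₁ : IsCopiedOn w₁ a h σ f) (h₂ : IsCopiedOn w₂ a h σ f) (htake : w₁.take a = w₂.take a)
    (hdrop : w₁.drop (a + h) = w₂.drop (a + h)) : w₁ = w₂ := by
  refine List.ext_getElem? fun s => ?_
  induction s using Nat.strong_induction_on with
  | _ s ih =>
    by_cases hsa : s < a
    · simpa [List.getElem?_take, hsa] using congrArg (·[s]?) htake
    by_cases hsh : s < a + h
    · obtain ⟨hlt, e₁⟩ := h₁.2 s (by omega) hsh
      rw [e₁, (h₂.2 s (by omega) hsh).2, ih _ hlt]
    · simpa [show a + h + (s - (a + h)) = s by omega] using congrArg (·[s - (a + h)]?) hdrop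

end Copying

section Pieces

variable {X : Type*}

/-- The copying rule of a piece occurring twice (`b = false`, `c` the shift between the
occurrences) or together with its inverse (`b = true`, `c` the sum of mirrored positions). -/
def copyIndex : Bool → ℕ → ℕ → ℕ
  | false, c, s => s - c
  | true, c, s => c - s

def copyLetter : Bool → X × Bool → X × Bool
  | false, p => p
  | true, p => (p.1, !p.2)

theorem occursAt.add_length_le {v w : List (X × Bool)} {i : ℕ} (h : occursAt v w i)
    (hv : v ≠ []) : i + v.length ≤ w.length := by
  have := congrArg List.length h
  have := List.length_pos_iff.mpr hv
  simp only [List.length_take, List.length_drop] at *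
  omega

theorem occursAt.getElem? {v w : List (X × Bool)} {i t : ℕ} (h : occursAt v w i)
    (ht : t < v.length) : w[i + t]? = v[t]? := by
  rw [← h, List.getElem?_take, if_pos ht, List.getElem?_drop]

@[simp] theorem length_wordInv (v : List (X × Bool)) : (wordInv v).length = v.length := by
  simp [wordInv]

@[simp] theorem wordInv_wordInv (v : List (X × Bool)) : wordInv (wordInv v) = v := by
  simp [wordInv, List.map_reverse, Function.comp_def]

theorem getElem?_wordInv {v : List (X × Bool)} {t : ℕ} (ht : t < v.length) :
    (wordInv v)[t]? = (v[v.length - 1 - t]?).map (copyLetter true) := by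
  rw [wordInv, List.getElem?_reverse (by simpa using ht), List.length_map, List.getElem?_map]
  rfl

theorem isCopiedOn_of_occursAt {v w : List (X × Bool)} {i j h : ℕ} (hi : occursAt v w i)
    (hj : occursAt v w j) (hv : v ≠ []) (hij : i < j) (hh : h ≤ v.length) :
    IsCopiedOn w (j + v.length - h) h (copyIndex false (j - i)) (copyLetter false) := by
  refine ⟨by have := hj.add_length_le hv; omega, fun s hs₁ hs₂ => ⟨?_, ?_⟩⟩
  · simp only [copyIndex]; omega
  · have e₁ := hj.getElem? (t := s - j) (by omega)
    have e₂ := hi.getElem? (t := s - j) (by omega)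
    rw [show j + (s - j) = s by omega] at e₁
    rw [show i + (s - j) = s - (j - i) by omega] at e₂
    simp [copyIndex, e₁, e₂, show copyLetter false = (id : X × Bool → X × Bool) from rfl]

/-- Only the second half of the inverted occurrence mirrors strictly earlier letters. -/
theorem isCopiedOn_of_occursAt_wordInv {v w : List (X × Bool)} {i j h : ℕ} (hi : occursAt v w i)
    (hj : occursAt (wordInv v) w j) (hv : v ≠ []) (hij : i ≤ j) (hh : 2 * h ≤ v.length) :
    IsCopiedOn w (j + v.length - h) h (copyIndex true (i + j + v.length - 1))
      (copyLetter true) := by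
  have hlen := hj.add_length_le (by simpa [← List.length_pos_iff] using hv)
  rw [length_wordInv] at hlen
  refine ⟨by omega, fun s hs₁ hs₂ => ⟨?_, ?_⟩⟩
  · simp only [copyIndex]; omega
  · have e₁ := hj.getElem? (t := s - j) (by rw [length_wordInv]; omega)
    have e₂ := hi.getElem? (t := v.length - 1 - (s - j)) (by omega)
    rw [show j + (s - j) = s by omega, getElem?_wordInv (by omega)] at e₁
    rw [show i + (v.length - 1 - (s - j)) = i + j + v.length - 1 - s by omega] at e₂
    simp [copyIndex, e₁, e₂]

theorem exists_isCopiedOn_of_isPiece {v w : List (X × Bool)} {h : ℕ} (hp : IsPiece v w)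
    (hh : 2 * h ≤ v.length) :
    ∃ b c a, c ≤ 2 * w.length ∧ IsCopiedOn w a h (copyIndex b c) (copyLetter b) := by
  obtain ⟨hv, ⟨i, j, hij, hi, hj⟩ | ⟨i, j, hi, hj⟩⟩ := hp
  · have hlen := hi.add_length_le hv
    have hlen' := hj.add_length_le hv
    rcases Nat.lt_or_gt_of_ne hij with hij | hij
    · exact ⟨false, j - i, _, by omega, isCopiedOn_of_occursAt hi hj hv hij (by omega)⟩
    · exact ⟨false, i - j, _, by omega, isCopiedOn_of_occursAt hj hi hv hij (by omega)⟩
  · have hv' : wordInv v ≠ [] := by simpa [← List.length_pos_iff] using hv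
    have hlen := hi.add_length_le hv
    have hlen' := hj.add_length_le hv'
    rw [length_wordInv] at hlen'
    rcases le_or_gt i j with hij | hij
    · exact ⟨true, _, _, by omega, isCopiedOn_of_occursAt_wordInv hi hj hv hij hh⟩
    · rw [← wordInv_wordInv v] at hi
      have := isCopiedOn_of_occursAt_wordInv hj hi hv' hij.le (by simpa using hh)
      exact ⟨true, _, _, by simp only [length_wordInv]; omega, this⟩

end Pieces

section Counting

variable {X : Type*} [DecidableEq X] [Fintype X] [Nonempty X]

theorem card_filter_isCopiedOn_le (m a h : ℕ) (σ : ℕ → ℕ) (f : X × Bool → X × Bool) :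
    ({w ∈ reducedWords X m | IsCopiedOn w a h σ f}).card ≤
      Fintype.card (X × Bool) ^ 2 * (Fintype.card (X × Bool) - 1) ^ (m - h) := by
  by_cases hm : a + h ≤ m
  swap
  · have hempty : {w ∈ reducedWords X m | IsCopiedOn w a h σ f} = ∅ :=
      Finset.filter_false_of_mem fun w hw hcopy => hm ((mem_reducedWords.mp hw).2 ▸ hcopy.1)
    simp [hempty]
  calc ({w ∈ reducedWords X m | IsCopiedOn w a h σ f}).card
      ≤ (reducedWords X a ×ˢ reducedWords X (m - (a + h))).card := by
        refine Finset.card_le_card_of_injOn (fun w => (w.take a, w.drop (a + h))) ?_ ?_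
        · intro w hw
          obtain ⟨hred, hlen⟩ := mem_reducedWords.mp (Finset.mem_filter.mp hw).1
          simp only [Finset.coe_product, Set.mem_prod, Finset.mem_coe, mem_reducedWords,
            List.length_take, List.length_drop]
          exact ⟨⟨hred.infix (List.take_prefix _ _).isInfix, by omega⟩,
            hred.infix (List.drop_suffix _ _).isInfix, by omega⟩
        · intro w₁ hw₁ w₂ hw₂ hw
          simp only [Finset.coe_filter, Set.mem_ofPred_eq, Prod.mk.injEq] at hw₁ hw₂ hw
          exact hw₁.2.eq hw₂.2 hw.1 hw.2
    _ = (reducedWords X a).card * (reducedWords X (m - (a + h))).card := Finset.card_product _ _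
    _ ≤ Fintype.card (X × Bool) * (Fintype.card (X × Bool) - 1) ^ a *
        (Fintype.card (X × Bool) * (Fintype.card (X × Bool) - 1) ^ (m - (a + h))) :=
      Nat.mul_le_mul (card_reducedWords_le a) (card_reducedWords_le _)
    _ = Fintype.card (X × Bool) ^ 2 * (Fintype.card (X × Bool) - 1) ^ (m - h) := by
      rw [show m - h = a + (m - (a + h)) by omega, pow_add]
      ring

theorem card_filter_isPiece_le (m h : ℕ) :
    ({w ∈ reducedWords X m | ∃ v, IsPiece v w ∧ 2 * h ≤ v.length}).card ≤
      4 * (m + 1) ^ 2 *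
        (Fintype.card (X × Bool) ^ 2 * (Fintype.card (X × Bool) - 1) ^ (m - h)) := by
  set copies := fun p : Bool × ℕ × ℕ =>
    {w ∈ reducedWords X m | IsCopiedOn w p.2.2 h (copyIndex p.1 p.2.1) (copyLetter p.1)}
  set indices := (Finset.univ : Finset Bool) ×ˢ Finset.range (2 * m + 1) ×ˢ Finset.range (m + 1)
  have hcover : {w ∈ reducedWords X m | ∃ v, IsPiece v w ∧ 2 * h ≤ v.length} ⊆
      indices.biUnion copies := by
    intro w hw
    obtain ⟨hw, v, hp, hh⟩ := Finset.mem_filter.mp hw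
    have hlen := (mem_reducedWords.mp hw).2
    obtain ⟨b, c, a, hc, hcopy⟩ := exists_isCopiedOn_of_isPiece hp hh
    have := hcopy.1
    refine Finset.mem_biUnion.mpr ⟨(b, c, a), ?_, Finset.mem_filter.mpr ⟨hw, hcopy⟩⟩
    simp only [indices, Finset.mem_product, Finset.mem_univ, Finset.mem_range, true_and]
    omega
  calc _ ≤ (indices.biUnion copies).card := Finset.card_le_card hcover
    _ ≤ ∑ p ∈ indices, (copies p).card := Finset.card_biUnion_le
    _ ≤ indices.card *
        (Fintype.card (X × Bool) ^ 2 * (Fintype.card (X × Bool) - 1) ^ (m - h)) :=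
      Finset.sum_le_card_nsmul _ _ _ fun p _ => card_filter_isCopiedOn_le m _ h _ _
    _ ≤ _ := by
      refine Nat.mul_le_mul_right _ ?_
      simp only [indices, Finset.card_product, Finset.card_univ, Fintype.card_bool,
        Finset.card_range]
      nlinarith

end Counting

section Balls

variable {X : Type*} [DecidableEq X] [Fintype X]

theorem toWord_mem_reducedWords (g : FreeGroup X) : g.toWord ∈ reducedWords X (glen g) :=
  mem_reducedWords.mpr ⟨FreeGroup.isReduced_toWord, rfl⟩

omit [Fintype X] in
theorem ncard_le_card_of_toWord_mem {S : Set (FreeGroup X)} {T : Finset (List (X × Bool))}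
    (h : ∀ g ∈ S, g.toWord ∈ T) : S.ncard ≤ T.card := by
  simpa using Set.ncard_le_ncard_of_injOn FreeGroup.toWord h FreeGroup.toWord_injective.injOn

theorem finite_ball (n : ℕ) : {g : FreeGroup X | glen g ≤ n}.Finite := by
  refine (((Finset.range (n + 1)).biUnion (reducedWords X)).finite_toSet.preimage
    FreeGroup.toWord_injective.injOn).subset fun g hg => ?_
  exact Finset.mem_biUnion.mpr
    ⟨glen g, Finset.mem_range.mpr (Nat.lt_succ_of_le hg), toWord_mem_reducedWords g⟩

theorem card_reducedWords_le_ncard_ball (n : ℕ) :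
    (reducedWords X n).card ≤ {g : FreeGroup X | glen g ≤ n}.ncard := by
  have toWord_mk {w} (hw : w ∈ reducedWords X n) : (FreeGroup.mk w).toWord = w := by
    rw [FreeGroup.toWord_mk, (mem_reducedWords.mp hw).1.reduce_eq]
  rw [← Set.ncard_coe_finset]
  refine Set.ncard_le_ncard_of_injOn FreeGroup.mk (fun w hw => ?_) (fun w₁ hw₁ w₂ hw₂ h => ?_)
    (finite_ball n)
  · show (FreeGroup.mk w).toWord.length ≤ n
    rw [toWord_mk hw, (mem_reducedWords.mp hw).2]
  · rw [← toWord_mk hw₁, ← toWord_mk hw₂, h]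

theorem ncard_ball_filter_isPiece_le [Nonempty X] {ε : ℝ} (hε : 0 ≤ ε) (n : ℕ) :
    {g : FreeGroup X | glen g ≤ n ∧ ∃ v, IsPiece v g.toWord ∧ ε * glen g ≤ (v.length : ℝ)}.ncard ≤
      ∑ m ∈ Finset.range (n + 1), 4 * (m + 1) ^ 2 *
        (Fintype.card (X × Bool) ^ 2 * (Fintype.card (X × Bool) - 1) ^ (m - ⌊ε * m / 2⌋₊)) := by
  refine (ncard_le_card_of_toWord_mem (T := (Finset.range (n + 1)).biUnion fun m =>
      {w ∈ reducedWords X m | ∃ v, IsPiece v w ∧ 2 * ⌊ε * m / 2⌋₊ ≤ v.length}) ?_).trans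
    (Finset.card_biUnion_le.trans (Finset.sum_le_sum fun m _ => card_filter_isPiece_le m _))
  rintro g ⟨hg, v, hp, hv⟩
  refine Finset.mem_biUnion.mpr ⟨glen g, Finset.mem_range.mpr (Nat.lt_succ_of_le hg),
    Finset.mem_filter.mpr ⟨toWord_mem_reducedWords g, v, hp, ?_⟩⟩
  have := Nat.floor_le (a := ε * glen g / 2) (by positivity)
  exact_mod_cast (by linarith : (2 * ⌊ε * glen g / 2⌋₊ : ℝ) ≤ v.length)

theorem ncard_inter_ball_le [Nonempty X] {P : Set (FreeGroup X)} {ε : ℝ} (hε : 0 ≤ ε)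
    (hfin : {p ∈ P | ¬ ∃ v, IsPiece v p.toWord ∧ ε * glen p ≤ (v.length : ℝ)}.Finite) (n : ℕ) :
    (P ∩ {g : FreeGroup X | glen g ≤ n}).ncard ≤
      {p ∈ P | ¬ ∃ v, IsPiece v p.toWord ∧ ε * glen p ≤ (v.length : ℝ)}.ncard +
      ∑ m ∈ Finset.range (n + 1), 4 * (m + 1) ^ 2 *
        (Fintype.card (X × Bool) ^ 2 * (Fintype.card (X × Bool) - 1) ^ (m - ⌊ε * m / 2⌋₊)) := by
  set B := {g : FreeGroup X | glen g ≤ n ∧ ∃ v, IsPiece v g.toWord ∧ ε * glen g ≤ (v.length : ℝ)}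
  have hsub : P ∩ {g : FreeGroup X | glen g ≤ n} ⊆
      {p ∈ P | ¬ ∃ v, IsPiece v p.toWord ∧ ε * glen p ≤ (v.length : ℝ)} ∪ B := by
    rintro p ⟨hp, hn⟩
    by_cases h : ∃ v, IsPiece v p.toWord ∧ ε * glen p ≤ (v.length : ℝ)
    · exact Or.inr ⟨hn, h⟩
    · exact Or.inl ⟨hp, h⟩
  calc _ ≤ _ := Set.ncard_le_ncard hsub (hfin.union ((finite_ball n).subset fun g hg => hg.1))
    _ ≤ _ := Set.ncard_union_le _ _
    _ ≤ _ := Nat.add_le_add_left (ncard_ball_filter_isPiece_le hε n) _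

end Balls

section Asymptotics

theorem pow_sub_floor_le {q ε : ℝ} (hq : 1 ≤ q) (hε₂ : ε ≤ 2) {m n : ℕ}
    (hmn : m ≤ n) : q ^ (m - ⌊ε * m / 2⌋₊) ≤ q * (q ^ n * (q ^ (-(ε / 2))) ^ n) := by
  have hq₀ : 0 < q := by linarith
  have hfloor : ⌊ε * m / 2⌋₊ ≤ m := Nat.floor_le_of_le (by nlinarith)
  have hfloor' := Nat.lt_floor_add_one (ε * m / 2)
  have hslope : (0 : ℝ) ≤ (n - m) * (1 - ε / 2) :=
    mul_nonneg (sub_nonneg.mpr (by exact_mod_cast hmn)) (by linarith)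
  calc q ^ (m - ⌊ε * m / 2⌋₊) = q ^ ((m : ℝ) - ⌊ε * m / 2⌋₊) := by
        rw [← Real.rpow_natCast, Nat.cast_sub hfloor]
    _ ≤ q ^ (1 + ((n : ℝ) + -(ε / 2) * n)) :=
        Real.rpow_le_rpow_of_exponent_le hq (by nlinarith)
    _ = q * (q ^ n * (q ^ (-(ε / 2))) ^ n) := by
        rw [Real.rpow_add hq₀, Real.rpow_add hq₀, Real.rpow_one, Real.rpow_natCast,
          Real.rpow_mul_natCast hq₀.le]

theorem tendsto_succ_pow_mul_pow_atTop {ρ : ℝ} (h₀ : 0 < ρ) (h₁ : ρ < 1) (d : ℕ) :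
    Tendsto (fun n : ℕ => ((n : ℝ) + 1) ^ d * ρ ^ n) atTop (𝓝 0) := by
  have := ((tendsto_add_atTop_iff_nat 1).mpr
    (tendsto_pow_const_mul_const_pow_of_lt_one d h₀.le h₁)).const_mul ρ⁻¹
  rw [mul_zero] at this
  refine this.congr fun n => ?_
  rw [pow_succ]
  push_cast
  field_simp

theorem tendsto_div_of_le_sum {N D : ℕ → ℕ} {C k q : ℕ} {ε : ℝ} (hq : 2 ≤ q) (hε₀ : 0 < ε)
    (hε₂ : ε ≤ 2)
    (hN : ∀ n, N n ≤ C + ∑ m ∈ Finset.range (n + 1),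
      4 * (m + 1) ^ 2 * (k ^ 2 * q ^ (m - ⌊ε * m / 2⌋₊)))
    (hD : ∀ n, q ^ n ≤ D n) :
    Tendsto (fun n => (N n : ℝ) / D n) atTop (𝓝 0) := by
  have hq₁ : (1 : ℝ) < q := by exact_mod_cast hq
  have hq₀ : (0 : ℝ) < q := by linarith
  set ρ : ℝ := (q : ℝ) ^ (-(ε / 2))
  have hρ₀ : 0 < ρ := Real.rpow_pos_of_pos hq₀ _
  have hρ₁ : ρ < 1 := Real.rpow_lt_one_of_one_lt_of_neg hq₁ (by linarith)
  have hbound : ∀ n, (N n : ℝ) / D n ≤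
      C * ((q : ℝ)⁻¹) ^ n + 4 * k ^ 2 * q * (((n : ℝ) + 1) ^ 3 * ρ ^ n) := by
    intro n
    have hsum : (N n : ℝ) ≤ C + (n + 1) * (4 * ((n : ℝ) + 1) ^ 2 *
        (k ^ 2 * (q * ((q : ℝ) ^ n * ρ ^ n)))) := by
      refine (Nat.cast_le.mpr (hN n)).trans ?_
      push_cast
      refine add_le_add le_rfl ((Finset.sum_le_card_nsmul _ _
        (4 * ((n : ℝ) + 1) ^ 2 * (k ^ 2 * (q * ((q : ℝ) ^ n * ρ ^ n)))) fun m hm => ?_).trans_eq ?_)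
      · have hmn : m ≤ n := Nat.lt_succ_iff.mp (Finset.mem_range.mp hm)
        have : ((m : ℝ) + 1) ^ 2 ≤ ((n : ℝ) + 1) ^ 2 := by gcongr
        gcongr
        exact pow_sub_floor_le hq₁.le hε₂ hmn
      · simp
    have hDn : (q : ℝ) ^ n ≤ D n := by exact_mod_cast hD n
    calc (N n : ℝ) / D n ≤ _ / (q : ℝ) ^ n := div_le_div₀ (by positivity) hsum (by positivity) hDn
      _ = _ := by rw [inv_pow]; field_simp
  have hlim := ((tendsto_pow_atTop_nhds_zero_of_lt_one (inv_nonneg.mpr hq₀.le)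
    (inv_lt_one_of_one_lt₀ hq₁)).const_mul (C : ℝ)).add
    ((tendsto_succ_pow_mul_pow_atTop hρ₀ hρ₁ 3).const_mul (4 * k ^ 2 * q : ℝ))
  rw [mul_zero, mul_zero, add_zero] at hlim
  exact squeeze_zero (fun n => by positivity) hbound hlim

end Asymptotics

theorem Negligible.exists_le {X : Type*} [DecidableEq X] {P : Set (FreeGroup X)}
    (hP : Negligible P) {c : ℝ} (hc : 0 < c) : ∃ ε, 0 < ε ∧ ε ≤ c ∧
      {p ∈ P | ¬ ∃ v, IsPiece v p.toWord ∧ ε * glen p ≤ (v.length : ℝ)}.Finite := by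
  obtain ⟨ε, hε, hfin⟩ := hP
  refine ⟨min ε c, lt_min hε hc, min_le_right _ _, hfin.subset ?_⟩
  rintro p ⟨hp, hnot⟩
  refine ⟨hp, fun ⟨v, hv, hlen⟩ => hnot ⟨v, hv, le_trans ?_ hlen⟩⟩
  exact mul_le_mul_of_nonneg_right (min_le_left _ _) (Nat.cast_nonneg _)

/-- Every negligible subset of a free group of rank ≥ 2 is CT-negligible: the proportion
of its elements in the ball of radius n tends to 0. -/
theorem negligible_is_CT_negligible {X : Type*} [DecidableEq X] [Fintype X]
    (hr : 2 ≤ Fintype.card X) (P : Set (FreeGroup X)) (hP : Negligible P) :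
    Filter.Tendsto
      (fun n : ℕ =>
        ((P ∩ {g : FreeGroup X | glen g ≤ n}).ncard : ℝ) /
          ({g : FreeGroup X | glen g ≤ n}.ncard : ℝ))
      Filter.atTop (nhds 0) := by
  have : Nonempty X := Fintype.card_pos_iff.mp (by omega)
  obtain ⟨ε, hε₀, hε₂, hfin⟩ := hP.exists_le two_pos
  refine tendsto_div_of_le_sum ?_ hε₀ hε₂ (ncard_inter_ball_le hε₀.le hfin)
    fun n => (pow_le_card_reducedWords n).trans (card_reducedWords_le_ncard_ball n)
  rw [Fintype.card_prod, Fintype.card_bool]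
  omega
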